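/- Let a, b, P > 0, let n1 ≥ n2 ≥ 1 be natural numbers with p := n2/n1, and let x ∈ ℝ^{n1} satisfy Σ_{i=1}^{n1} x_i² = n1·P. Let Z = (Z₁,…,Z_{n1}) be i.i.d. standard Gaussian random variables, and define ĩ := Σ_{i=1}^{n2} ℓ_{a,P}(x_i, Z_i) + Σ_{i=n2+1}^{n1} ℓ_{b,P}(x_i, Z_i). Then E[(1/n1)·ĩ] = p·(1/2)·ln(1 + a·P) + (1 − p)·(1/2)·ln(1 + b·P) + ((1 − p)/2)·( a/(1 + a·P) − b/(1 + b·P) )·P + (1/2)·( b/(1 + b·P) − a/(1 + a·P) )·(1/n1)·Σ_{i=n2+1}^{n1} x_i². -/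
import Mathlib

open MeasureTheory ProbabilityTheory

/-- Density of the centered Gaussian with standard deviation `σ`. -/
noncomputable def gaussDensity (σ y : ℝ) : ℝ :=
  (1 / (σ * Real.sqrt (2 * Real.pi))) * Real.exp (-(y ^ 2) / (2 * σ ^ 2))

/-- Single-letter modified information density of the Gaussian channel
`Y = √g·X + Z` with reference output distribution `N(0, 1+gP)`. -/
noncomputable def infoDensity1 (g P x z : ℝ) : ℝ :=
  Real.log (gaussDensity 1 z) -
    Real.log (gaussDensity (Real.sqrt (1 + g * P)) (Real.sqrt g * x + z))

namespace SatoAux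

open Real Set
open scoped NNReal ENNReal

lemma pdf01 (z : ℝ) : gaussianPDFReal 0 1 z
    = (Real.sqrt (2 * Real.pi))⁻¹ * Real.exp (-(z ^ 2) / 2) := by
  simp [gaussianPDFReal]

lemma int_mom1 : Integrable (fun z : ℝ => gaussianPDFReal 0 1 z * z) := by
  have h1 : Integrable (fun z : ℝ => z * Real.exp (-(1/2) * z ^ 2)) :=
    integrable_mul_exp_neg_mul_sq (by norm_num)
  have := (h1.const_mul ((Real.sqrt (2 * Real.pi))⁻¹))
  refine this.congr (Filter.Eventually.of_forall fun z => ?_)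
  simp only [pdf01]
  rw [show -(z^2)/2 = -(1/2) * z^2 by ring]; ring

lemma int_mom2 : Integrable (fun z : ℝ => gaussianPDFReal 0 1 z * z ^ 2) := by
  have h1 : Integrable (fun z : ℝ => z ^ (2:ℝ) * Real.exp (-(1/2) * z ^ 2)) :=
    integrable_rpow_mul_exp_neg_mul_sq (by norm_num) (by norm_num)
  have h2 : Integrable (fun z : ℝ => z ^ 2 * Real.exp (-(1/2) * z ^ 2)) := by
    refine h1.congr (Filter.Eventually.of_forall fun z => ?_)
    simp only [Real.rpow_two]
  have := h2.const_mul ((Real.sqrt (2 * Real.pi))⁻¹)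
  refine this.congr (Filter.Eventually.of_forall fun z => ?_)
  simp only [pdf01]
  rw [show -(z^2)/2 = -(1/2) * z^2 by ring]; ring

lemma val_mom1 : ∫ z : ℝ, gaussianPDFReal 0 1 z * z = 0 := by
  have h := integral_neg_eq_self (fun z : ℝ => gaussianPDFReal 0 1 z * z) volume
  have hps : ∀ z : ℝ, gaussianPDFReal 0 1 (-z) * (-z) = -(gaussianPDFReal 0 1 z * z) := by
    intro z; simp [pdf01]
  simp only [hps] at h
  rw [integral_neg] at h
  linarith

lemma int_sq_exp : ∫ z : ℝ, z ^ 2 * Real.exp (-(1/2) * z ^ 2) = Real.sqrt (2 * Real.pi) := by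
  have habs : (∫ z : ℝ, z ^ 2 * Real.exp (-(1/2) * z ^ 2))
      = ∫ z : ℝ, (fun t : ℝ => t ^ 2 * Real.exp (-(1/2) * t ^ 2)) |z| :=
    integral_congr_ae (Filter.Eventually.of_forall fun z => by simp [sq_abs])
  rw [habs, integral_comp_abs (f := fun z : ℝ => z ^ 2 * Real.exp (-(1/2) * z ^ 2))]
  have h := integral_rpow_mul_exp_neg_mul_rpow (p := 2) (q := 2) (b := 1/2)
    (by norm_num) (by norm_num) (by norm_num)
  simp only [Real.rpow_two] at h
  rw [h]
  have hG : Real.Gamma ((2 + 1) / 2) = Real.sqrt Real.pi / 2 := by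
    rw [show ((2:ℝ) + 1) / 2 = 1/2 + 1 by norm_num, Real.Gamma_add_one (by norm_num),
      Real.Gamma_one_half_eq]
    ring
  have hb : ((1:ℝ)/2) ^ (-((2:ℝ)+1) / 2) = 2 * Real.sqrt 2 := by
    rw [show (-((2:ℝ)+1)/2) = -(3/2) by norm_num, show ((1:ℝ)/2) = 2⁻¹ by norm_num,
      Real.inv_rpow (by norm_num), Real.rpow_neg (by norm_num), inv_inv,
      show ((3:ℝ)/2) = 1 + 1/2 by norm_num, Real.rpow_add (by norm_num), Real.rpow_one,
      ← Real.sqrt_eq_rpow]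
  rw [hG, hb, Real.sqrt_mul (by norm_num)]
  ring

lemma val_mom0 : ∫ z : ℝ, gaussianPDFReal 0 1 z = 1 :=
  integral_gaussianPDFReal_eq_one 0 one_ne_zero

lemma val_mom2 : ∫ z : ℝ, gaussianPDFReal 0 1 z * z ^ 2 = 1 := by
  have he : (∫ z : ℝ, gaussianPDFReal 0 1 z * z ^ 2)
      = (Real.sqrt (2 * Real.pi))⁻¹ * ∫ z : ℝ, z ^ 2 * Real.exp (-(1/2) * z ^ 2) := by
    rw [← integral_const_mul]
    refine integral_congr_ae (Filter.Eventually.of_forall fun z => ?_)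
    simp only [pdf01]
    rw [show -(z^2)/2 = -(1/2) * z^2 by ring]; ring
  rw [he, int_sq_exp, inv_mul_cancel₀ (Real.sqrt_ne_zero'.2 (by positivity))]

lemma integral_gauss01 (f : ℝ → ℝ) :
    ∫ z, f z ∂(gaussianReal 0 1) = ∫ z, gaussianPDFReal 0 1 z * f z := by
  rw [gaussianReal_of_var_ne_zero 0 one_ne_zero]
  have hd : gaussianPDF 0 1 = fun x => ((Real.toNNReal (gaussianPDFReal 0 1 x) : ℝ≥0) : ℝ≥0∞) := rfl
  rw [hd, integral_withDensity_eq_integral_smul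
    ((measurable_gaussianPDFReal 0 1).real_toNNReal) f]
  refine integral_congr_ae (Filter.Eventually.of_forall fun z => ?_)
  simp [NNReal.smul_def, Real.coe_toNNReal _ (gaussianPDFReal_nonneg 0 1 z)]

lemma integrable_gauss01 (f : ℝ → ℝ)
    (h : Integrable (fun z => gaussianPDFReal 0 1 z * f z)) :
    Integrable f (gaussianReal 0 1) := by
  rw [gaussianReal_of_var_ne_zero 0 one_ne_zero]
  have hd : gaussianPDF 0 1 = fun x => ((Real.toNNReal (gaussianPDFReal 0 1 x) : ℝ≥0) : ℝ≥0∞) := rfl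
  rw [hd, integrable_withDensity_iff_integrable_smul
    ((measurable_gaussianPDFReal 0 1).real_toNNReal)]
  refine h.congr (Filter.Eventually.of_forall fun z => ?_)
  simp [NNReal.smul_def, Real.coe_toNNReal _ (gaussianPDFReal_nonneg 0 1 z)]

lemma i_0 (c0 : ℝ) : Integrable (fun z : ℝ => c0 * gaussianPDFReal 0 1 z) :=
  (integrable_gaussianPDFReal 0 1).const_mul c0

lemma i_1 (c1 : ℝ) : Integrable (fun z : ℝ => c1 * (gaussianPDFReal 0 1 z * z)) :=
  int_mom1.const_mul c1

lemma i_2 (c2 : ℝ) : Integrable (fun z : ℝ => c2 * (gaussianPDFReal 0 1 z * z ^ 2)) :=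
  int_mom2.const_mul c2

lemma i_01 (c0 c1 : ℝ) :
    Integrable (fun z : ℝ => c0 * gaussianPDFReal 0 1 z
      + c1 * (gaussianPDFReal 0 1 z * z)) := (i_0 c0).add (i_1 c1)

lemma i_012 (c0 c1 c2 : ℝ) :
    Integrable (fun z : ℝ => c0 * gaussianPDFReal 0 1 z
      + c1 * (gaussianPDFReal 0 1 z * z) + c2 * (gaussianPDFReal 0 1 z * z ^ 2)) :=
  (i_01 c0 c1).add (i_2 c2)

lemma integrable_poly_pdf (c0 c1 c2 : ℝ) :
    Integrable (fun z : ℝ => gaussianPDFReal 0 1 z * (c0 + c1 * z + c2 * z ^ 2)) := by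
  refine (i_012 c0 c1 c2).congr (Filter.Eventually.of_forall fun z => ?_)
  ring

lemma integral_poly_gauss (c0 c1 c2 : ℝ) :
    ∫ z, (c0 + c1 * z + c2 * z ^ 2) ∂(gaussianReal 0 1) = c0 + c2 := by
  rw [integral_gauss01]
  have he : (∫ z : ℝ, gaussianPDFReal 0 1 z * (c0 + c1 * z + c2 * z ^ 2))
      = ∫ z : ℝ, (c0 * gaussianPDFReal 0 1 z + c1 * (gaussianPDFReal 0 1 z * z))
          + c2 * (gaussianPDFReal 0 1 z * z ^ 2) := by
    refine integral_congr_ae (Filter.Eventually.of_forall fun z => ?_)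
    simp only []; ring
  rw [he, integral_add (i_01 c0 c1) (i_2 c2),
    integral_add (i_0 c0) (i_1 c1),
    integral_const_mul, integral_const_mul, integral_const_mul, val_mom0, val_mom1, val_mom2]
  ring

lemma infoDensity1_eq (g P : ℝ) (hg : 0 < g) (hP : 0 < P) (x z : ℝ) :
    infoDensity1 g P x z =
      (1/2 * Real.log (1 + g*P) + g * x^2 / (2*(1+g*P)))
      + (Real.sqrt g * x / (1+g*P)) * z + (1/(2*(1+g*P)) - 1/2) * z^2 := by
  have hs : (0:ℝ) < 1 + g*P := by positivity
  have h2π : (0:ℝ) < Real.sqrt (2*Real.pi) := Real.sqrt_pos.2 (by positivity)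
  have hss : (0:ℝ) < Real.sqrt (1 + g*P) := Real.sqrt_pos.2 hs
  have e1 : Real.log (gaussDensity 1 z)
      = -Real.log (Real.sqrt (2*Real.pi)) + (-(z^2)/2) := by
    unfold gaussDensity
    rw [one_mul, one_div, Real.log_mul (inv_ne_zero h2π.ne') (Real.exp_ne_zero _),
      Real.log_inv, Real.log_exp]
    norm_num
  have e2 : Real.log (gaussDensity (Real.sqrt (1+g*P)) (Real.sqrt g * x + z))
      = -(1/2 * Real.log (1+g*P)) - Real.log (Real.sqrt (2*Real.pi))
        + (-((Real.sqrt g * x + z)^2)/(2*(1+g*P))) := by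
    unfold gaussDensity
    rw [one_div, Real.log_mul (inv_ne_zero (by positivity)) (Real.exp_ne_zero _),
      Real.log_inv, Real.log_mul hss.ne' h2π.ne', Real.log_sqrt hs.le,
      Real.log_exp, Real.sq_sqrt hs.le]
    ring
  have e3 : (Real.sqrt g * x + z)^2 = g*x^2 + 2*(Real.sqrt g * x)*z + z^2 := by
    have h := Real.sq_sqrt hg.le
    calc (Real.sqrt g * x + z)^2
        = (Real.sqrt g)^2*x^2 + 2*(Real.sqrt g * x)*z + z^2 := by ring
      _ = g*x^2 + 2*(Real.sqrt g * x)*z + z^2 := by rw [h]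
  unfold infoDensity1
  rw [e1, e2, e3]
  field_simp
  ring

lemma measurable_infoDensity1 (g P x : ℝ) (hg : 0 < g) (hP : 0 < P) :
    Measurable (fun z => infoDensity1 g P x z) := by
  have : (fun z => infoDensity1 g P x z)
      = fun z => (1/2 * Real.log (1 + g*P) + g * x^2 / (2*(1+g*P)))
        + (Real.sqrt g * x / (1+g*P)) * z + (1/(2*(1+g*P)) - 1/2) * z^2 :=
    funext fun z => infoDensity1_eq g P hg hP x z
  rw [this]
  fun_prop

lemma integrable_infoDensity1 (g P x : ℝ) (hg : 0 < g) (hP : 0 < P) :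
    Integrable (fun z => infoDensity1 g P x z) (gaussianReal 0 1) := by
  refine integrable_gauss01 _ ?_
  have h := integrable_poly_pdf (1/2 * Real.log (1 + g*P) + g * x^2 / (2*(1+g*P)))
    (Real.sqrt g * x / (1+g*P)) (1/(2*(1+g*P)) - 1/2)
  refine h.congr (Filter.Eventually.of_forall fun z => ?_)
  simp only [infoDensity1_eq g P hg hP]

lemma integral_infoDensity1 (g P x : ℝ) (hg : 0 < g) (hP : 0 < P) :
    ∫ z, infoDensity1 g P x z ∂(gaussianReal 0 1)
      = 1/2 * Real.log (1 + g*P) + g/(2*(1+g*P)) * (x^2 - P) := by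
  have he : (∫ z, infoDensity1 g P x z ∂(gaussianReal 0 1))
      = ∫ z, ((1/2 * Real.log (1 + g*P) + g * x^2 / (2*(1+g*P)))
        + (Real.sqrt g * x / (1+g*P)) * z + (1/(2*(1+g*P)) - 1/2) * z^2)
        ∂(gaussianReal 0 1) :=
    integral_congr_ae (Filter.Eventually.of_forall fun z => infoDensity1_eq g P hg hP x z)
  rw [he, integral_poly_gauss]
  have hs : (1:ℝ) + g*P ≠ 0 := by positivity
  field_simp
  ring

lemma map_eval_pi {n : ℕ} (i : Fin n) :
    (Measure.pi fun _ : Fin n => gaussianReal (0:ℝ) 1).map (fun z => z i)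
      = gaussianReal 0 1 := by
  refine Measure.ext fun s hs => ?_
  rw [Measure.map_apply (measurable_pi_apply i) hs]
  have hpre : (fun z : Fin n → ℝ => z i) ⁻¹' s
      = Set.pi Set.univ (Function.update (fun _ : Fin n => Set.univ) i s) := by
    ext z
    simp only [Set.mem_preimage, Set.mem_univ_pi, Function.update_apply]
    constructor
    · intro h j
      by_cases hj : j = i
      · subst hj; simpa
      · simp [hj]
    · intro h
      have := h i
      simpa using this
  rw [hpre, Measure.pi_pi]
  rw [Finset.prod_eq_single i (fun j _ hj => by simp [Function.update_of_ne hj]) (by simp)]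
  simp

lemma integral_eval_pi {n : ℕ} (i : Fin n) (f : ℝ → ℝ) (hf : Measurable f) :
    ∫ z : Fin n → ℝ, f (z i) ∂(Measure.pi fun _ : Fin n => gaussianReal (0:ℝ) 1)
      = ∫ y, f y ∂(gaussianReal 0 1) := by
  rw [← map_eval_pi i, integral_map (measurable_pi_apply i).aemeasurable]
  rw [map_eval_pi i]
  exact hf.aestronglyMeasurable

lemma integrable_eval_pi {n : ℕ} (i : Fin n) (f : ℝ → ℝ) (hf : Measurable f)
    (hi : Integrable f (gaussianReal 0 1)) :
    Integrable (fun z : Fin n → ℝ => f (z i))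
      (Measure.pi fun _ : Fin n => gaussianReal (0:ℝ) 1) :=
  (integrable_map_measure (by rw [map_eval_pi i]; exact hf.aestronglyMeasurable)
    (measurable_pi_apply i).aemeasurable).mp (by rwa [map_eval_pi i])

end SatoAux

open SatoAux in
/-- Expectation of the normalized heterogeneous-blocklength modified information
density for a codeword `x` on the power shell `‖x‖² = n1·P`: the constants
`C_{ρ,1}` and `C_{ρ,2}` of the Sato-type outer bound. -/
theorem expectation_hetero_info_density (a b P : ℝ) (ha : 0 < a) (hb : 0 < b)
    (hP : 0 < P) (n1 n2 : ℕ) (hn2 : 1 ≤ n2) (hn : n2 ≤ n1)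
    (x : Fin n1 → ℝ) (hx : ∑ i, x i ^ 2 = n1 * P) :
    (∫ z : Fin n1 → ℝ,
        (1 / (n1 : ℝ)) *
          ∑ i : Fin n1,
            (if (i : ℕ) < n2 then infoDensity1 a P (x i) (z i)
             else infoDensity1 b P (x i) (z i))
        ∂(Measure.pi fun _ : Fin n1 => gaussianReal 0 1)) =
      ((n2 : ℝ) / n1) * (1 / 2 * Real.log (1 + a * P)) +
        (1 - (n2 : ℝ) / n1) * (1 / 2 * Real.log (1 + b * P)) +
        (1 - (n2 : ℝ) / n1) / 2 * (a / (1 + a * P) - b / (1 + b * P)) * P +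
        1 / 2 * (b / (1 + b * P) - a / (1 + a * P)) *
          ((1 / (n1 : ℝ)) * ∑ i : Fin n1, if n2 ≤ (i : ℕ) then x i ^ 2 else 0) := by
  have hn1 : (0:ℝ) < n1 := by
    have : 1 ≤ n1 := le_trans hn2 hn
    exact_mod_cast Nat.lt_of_lt_of_le Nat.zero_lt_one this
  set ν := Measure.pi fun _ : Fin n1 => gaussianReal (0:ℝ) 1 with hν
  -- integrability of each summand
  have hsummand : ∀ i : Fin n1, Integrable
      (fun z : Fin n1 → ℝ => if (i : ℕ) < n2 then infoDensity1 a P (x i) (z i)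
        else infoDensity1 b P (x i) (z i)) ν := by
    intro i
    by_cases h : (i : ℕ) < n2
    · simp only [if_pos h]
      exact integrable_eval_pi i _ (measurable_infoDensity1 a P (x i) ha hP)
        (integrable_infoDensity1 a P (x i) ha hP)
    · simp only [if_neg h]
      exact integrable_eval_pi i _ (measurable_infoDensity1 b P (x i) hb hP)
        (integrable_infoDensity1 b P (x i) hb hP)
  rw [integral_const_mul, integral_finset_sum Finset.univ (fun i _ => hsummand i)]
  have hterm : ∀ i : Fin n1,
      (∫ z : Fin n1 → ℝ, (if (i : ℕ) < n2 then infoDensity1 a P (x i) (z i)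
        else infoDensity1 b P (x i) (z i)) ∂ν)
      = (if (i : ℕ) < n2 then (1:ℝ) else 0)
          * (1/2 * Real.log (1 + a*P) + a/(2*(1+a*P)) * (x i^2 - P))
        + (if n2 ≤ (i : ℕ) then (1:ℝ) else 0)
          * (1/2 * Real.log (1 + b*P) + b/(2*(1+b*P)) * (x i^2 - P)) := by
    intro i
    by_cases h : (i : ℕ) < n2
    · simp only [if_pos h, if_neg (by omega : ¬ n2 ≤ (i : ℕ)), one_mul, zero_mul, add_zero]
      rw [integral_eval_pi i _ (measurable_infoDensity1 a P (x i) ha hP)]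
      exact integral_infoDensity1 a P (x i) ha hP
    · simp only [if_neg h, if_pos (by omega : n2 ≤ (i : ℕ)), one_mul, zero_mul, zero_add]
      rw [integral_eval_pi i _ (measurable_infoDensity1 b P (x i) hb hP)]
      exact integral_infoDensity1 b P (x i) hb hP
  rw [Finset.sum_congr rfl fun i _ => hterm i]
  -- counting sums
  have hcount1 : ∑ i : Fin n1, (if (i : ℕ) < n2 then (1:ℝ) else 0) = n2 := by
    rw [Fin.sum_univ_eq_sum_range (fun k => if k < n2 then (1:ℝ) else 0) n1,
      Finset.sum_boole]
    congr 1
    have : (Finset.range n1).filter (fun k => k < n2) = Finset.range n2 := by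
      ext k; simp only [Finset.mem_filter, Finset.mem_range]; omega
    rw [this, Finset.card_range]
  have hcount2 : ∑ i : Fin n1, (if n2 ≤ (i : ℕ) then (1:ℝ) else 0) = (n1:ℝ) - n2 := by
    rw [Fin.sum_univ_eq_sum_range (fun k => if n2 ≤ k then (1:ℝ) else 0) n1,
      Finset.sum_boole]
    have : (Finset.range n1).filter (fun k => n2 ≤ k) = Finset.Ico n2 n1 := by
      ext k; simp only [Finset.mem_filter, Finset.mem_range, Finset.mem_Ico]; omega
    rw [this, Nat.card_Ico, Nat.cast_sub hn]
  have hsplit : ∑ i : Fin n1, (if (i : ℕ) < n2 then x i ^ 2 else 0)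
      = (n1:ℝ) * P - ∑ i : Fin n1, (if n2 ≤ (i : ℕ) then x i ^ 2 else 0) := by
    rw [eq_sub_iff_add_eq, ← Finset.sum_add_distrib, ← hx]
    refine Finset.sum_congr rfl fun i _ => ?_
    by_cases h : (i : ℕ) < n2
    · rw [if_pos h, if_neg (by omega : ¬ n2 ≤ (i : ℕ))]; ring
    · rw [if_neg h, if_pos (by omega : n2 ≤ (i : ℕ))]; ring
  -- expand the sum of products
  have hexp : ∀ i : Fin n1,
      (if (i : ℕ) < n2 then (1:ℝ) else 0)
          * (1/2 * Real.log (1 + a*P) + a/(2*(1+a*P)) * (x i^2 - P))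
        + (if n2 ≤ (i : ℕ) then (1:ℝ) else 0)
          * (1/2 * Real.log (1 + b*P) + b/(2*(1+b*P)) * (x i^2 - P))
      = (if (i : ℕ) < n2 then (1:ℝ) else 0)
          * (1/2 * Real.log (1 + a*P) - a/(2*(1+a*P)) * P)
        + (if (i : ℕ) < n2 then x i ^ 2 else 0) * (a/(2*(1+a*P)))
        + (if n2 ≤ (i : ℕ) then (1:ℝ) else 0)
          * (1/2 * Real.log (1 + b*P) - b/(2*(1+b*P)) * P)
        + (if n2 ≤ (i : ℕ) then x i ^ 2 else 0) * (b/(2*(1+b*P))) := by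
    intro i
    by_cases h : (i : ℕ) < n2
    · simp only [if_pos h, if_neg (by omega : ¬ n2 ≤ (i : ℕ))]; ring
    · simp only [if_neg h, if_pos (by omega : n2 ≤ (i : ℕ))]; ring
  rw [Finset.sum_congr rfl fun i _ => hexp i]
  simp only [Finset.sum_add_distrib, ← Finset.sum_mul]
  rw [hcount1, hcount2, hsplit]
  have h1a : (1:ℝ) + a*P ≠ 0 := by positivity
  have h1b : (1:ℝ) + b*P ≠ 0 := by positivity
  field_simp
  ring
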